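/- arXiv:1710.00293 — 2 statements merged into one kernel-verified Lean document; each statement's English description precedes it below -/
import Mathlib

section
/- Let n ≥ 2 and m ≥ 0 be integers, let r_0 > 0, and let x_1,…,x_m ∈ ℝ^n and r_1,…,r_m > 0 satisfy ‖x_i‖ + r_i < r_0 for i = 1,…,m and ‖x_i − x_j‖ > r_i + r_j for all i ≠ j. Define the sphere world X_{n,m} = {x ∈ ℝ^n : ‖x‖ ≤ r_0} − ⋃_{i=1}^m {x ∈ ℝ^n : ‖x − x_i‖ < r_i}. Then the interior Int(X_{n,m}) (as a manifold with boundary, i.e. {x ∈ ℝ^n : ‖x‖ < r_0, and ‖x − x_i‖ > r_i for all i}) is homeomorphic to ℝ^n − Q_m, where Q_m is any fixed set of m distinct points of ℝ^n. -/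
open scoped Topology

open Metric Set

section Auxiliary

variable {E : Type*} [NormedAddCommGroup E] [NormedSpace ℝ E]


lemma push_exists [CompleteSpace E] (c b : E) (ρ : ℝ) (hρ : 0 < ρ) (hb : b ∈ ball c ρ) :
    ∃ e : E ≃ₜ E, e c = b ∧ ∀ x ∉ ball c ρ, e x = x := by
  rw [mem_ball, dist_eq_norm] at hb
  set v := b - c with hv
  set φ : E → ℝ := fun x => max (1 - ‖x - c‖ / ρ) 0 with hφ
  set f : E → E := fun x => x + φ x • v with hf
  have hφc : Continuous φ := by
    apply Continuous.max _ continuous_const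
    exact continuous_const.sub (((continuous_id.sub continuous_const).norm).div_const ρ)
  have hfc : Continuous f := continuous_id.add (hφc.smul continuous_const)
  have hφlip : ∀ x y, |φ x - φ y| ≤ ‖x - y‖ / ρ := by
    intro x y
    have h1 : |φ x - φ y| ≤ |(1 - ‖x - c‖ / ρ) - (1 - ‖y - c‖ / ρ)| :=
      abs_max_sub_max_le_abs _ _ _
    have h2 : (1 - ‖x - c‖ / ρ) - (1 - ‖y - c‖ / ρ) = (‖y - c‖ - ‖x - c‖) / ρ := by ring
    rw [h2, abs_div, abs_of_pos hρ] at h1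
    refine h1.trans (div_le_div_of_nonneg_right ?_ hρ.le)
    calc |‖y - c‖ - ‖x - c‖| ≤ ‖(y - c) - (x - c)‖ := abs_norm_sub_norm_le _ _
      _ = ‖x - y‖ := by rw [show (y - c) - (x - c) = y - x by abel, norm_sub_rev]
  have hL : ‖v‖ / ρ < 1 := (div_lt_one hρ).2 hb
  have hLnn : 0 ≤ ‖v‖ / ρ := by positivity
  have hlow : ∀ x y, (1 - ‖v‖ / ρ) * ‖x - y‖ ≤ ‖f x - f y‖ := by
    intro x y
    have hd : f x - f y = (x - y) + (φ x - φ y) • v := by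
      show (x + φ x • v) - (y + φ y • v) = _
      rw [sub_smul]; abel
    have h1 : ‖x - y‖ - ‖(φ x - φ y) • v‖ ≤ ‖f x - f y‖ := by
      rw [hd]
      have := norm_sub_norm_le (x - y) (-((φ x - φ y) • v))
      rwa [norm_neg, sub_neg_eq_add] at this
    have h2 : ‖(φ x - φ y) • v‖ ≤ (‖x - y‖ / ρ) * ‖v‖ := by
      rw [norm_smul, Real.norm_eq_abs]
      exact mul_le_mul_of_nonneg_right (hφlip x y) (norm_nonneg v)
    have h3 : (‖x - y‖ / ρ) * ‖v‖ = (‖v‖ / ρ) * ‖x - y‖ := by ring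
    have h4 : (1 - ‖v‖ / ρ) * ‖x - y‖ = ‖x - y‖ - (‖v‖ / ρ) * ‖x - y‖ := by ring
    linarith
  have hinj : Function.Injective f := by
    intro x y hxy
    have h0 := hlow x y
    rw [hxy, sub_self, norm_zero] at h0
    have h1 : ‖x - y‖ = 0 := by nlinarith [norm_nonneg (x - y)]
    rwa [norm_sub_eq_zero_iff] at h1
  have hsurj : Function.Surjective f := by
    intro y
    set g : E → E := fun x => y - φ x • v with hg
    have hcontr : ContractingWith ⟨‖v‖ / ρ, hLnn⟩ g := by
      constructor
      · exact_mod_cast hL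
      · refine LipschitzWith.of_dist_le_mul fun x x' => ?_
        rw [dist_eq_norm, dist_eq_norm]
        have hd : g x - g x' = (φ x' - φ x) • v := by
          show (y - φ x • v) - (y - φ x' • v) = _
          rw [sub_smul]; abel
        rw [hd, norm_smul, Real.norm_eq_abs, abs_sub_comm]
        calc |φ x - φ x'| * ‖v‖ ≤ (‖x - x'‖ / ρ) * ‖v‖ :=
              mul_le_mul_of_nonneg_right (hφlip x x') (norm_nonneg v)
          _ = (⟨‖v‖ / ρ, hLnn⟩ : NNReal) * ‖x - x'‖ := by
              show _ = (‖v‖ / ρ) * _; ring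
    obtain ⟨x₀, hx₀, -⟩ := hcontr.exists_fixedPoint y (edist_ne_top _ _)
    refine ⟨x₀, ?_⟩
    have hfix : y - φ x₀ • v = x₀ := hx₀
    exact eq_sub_iff_add_eq.mp hfix.symm
  set eqv := Equiv.ofBijective f ⟨hinj, hsurj⟩ with heqv
  have h1L : 0 < 1 - ‖v‖ / ρ := by linarith
  have hinvlip : ∀ y z : E, dist (eqv.symm y) (eqv.symm z) ≤ (1 - ‖v‖ / ρ)⁻¹ * dist y z := by
    intro y z
    have h1 := hlow (eqv.symm y) (eqv.symm z)
    have h2 : f (eqv.symm y) = y := eqv.apply_symm_apply y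
    have h3 : f (eqv.symm z) = z := eqv.apply_symm_apply z
    rw [h2, h3] at h1
    rw [dist_eq_norm, dist_eq_norm, inv_mul_eq_div, le_div_iff₀ h1L]
    linarith [h1]
  refine ⟨⟨eqv, hfc, ?_⟩, ?_, ?_⟩
  · exact (LipschitzWith.of_dist_le_mul (K := ⟨(1 - ‖v‖ / ρ)⁻¹, by positivity⟩)
      fun y z => hinvlip y z).continuous
  · show f c = b
    have hφ1 : φ c = 1 := by
      show max (1 - ‖c - c‖ / ρ) 0 = 1
      rw [sub_self, norm_zero, zero_div, sub_zero]
      exact max_eq_left zero_le_one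
    show c + φ c • v = b
    rw [hφ1, one_smul, hv]; abel
  · intro x hx
    rw [mem_ball, dist_eq_norm, not_lt] at hx
    have hφ0 : φ x = 0 := by
      apply max_eq_right
      rw [sub_nonpos]
      exact (le_div_iff₀ hρ).2 (by linarith)
    show x + φ x • v = x
    rw [hφ0, zero_smul, add_zero]

lemma homog_exists [CompleteSpace E] (U : Set E) (hU : IsOpen U) (hconn : IsPreconnected U)
    {a b : E} (ha : a ∈ U) (hb : b ∈ U) :
    ∃ e : E ≃ₜ E, e a = b ∧ ∀ x ∉ U, e x = x := by
  classical
  set S : Set E := {p ∈ U | ∃ e : E ≃ₜ E, e a = p ∧ ∀ x ∉ U, e x = x} with hS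
  have haS : a ∈ S := ⟨ha, Homeomorph.refl E, rfl, fun x _ => rfl⟩
  have key : ∀ p, p ∈ U → ∃ ρ, 0 < ρ ∧ ball p ρ ⊆ U ∧ ∀ q ∈ ball p ρ, (p ∈ S ↔ q ∈ S) := by
    intro p hp
    obtain ⟨ρ, hρpos, hsub⟩ := Metric.isOpen_iff.1 hU p hp
    refine ⟨ρ, hρpos, hsub, fun q hq => ?_⟩
    obtain ⟨τ, hτp, hτid⟩ := push_exists p q ρ hρpos hq
    have hτid' : ∀ x ∉ U, τ x = x := fun x hx => hτid x (fun h => hx (hsub h))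
    have hτsymm : ∀ x ∉ U, τ.symm x = x := by
      intro x hx
      conv_lhs => rw [← hτid' x hx]
      exact τ.symm_apply_apply x
    constructor
    · rintro ⟨-, e, hea, heid⟩
      exact ⟨hsub hq, e.trans τ, by simp [hea, hτp], fun x hx => by
        simp [heid x hx, hτid' x hx]⟩
    · rintro ⟨-, e, hea, heid⟩
      refine ⟨hp, e.trans τ.symm, ?_, fun x hx => by simp [heid x hx, hτsymm x hx]⟩
      simp [hea]
      rw [← hτp]
      exact τ.symm_apply_apply p
  choose! ρ hρpos hρsub hρiff using key
  by_contra hcon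
  have hbS : b ∉ S := fun h => hcon h.2
  set u : Set E := ⋃ (p : E) (_ : p ∈ S), ball p (ρ p) with hu
  set w : Set E := ⋃ (p : E) (_ : p ∈ U \ S), ball p (ρ p) with hw
  have huo : IsOpen u := isOpen_iUnion fun p => isOpen_iUnion fun _ => isOpen_ball
  have hwo : IsOpen w := isOpen_iUnion fun p => isOpen_iUnion fun _ => isOpen_ball
  have hcover : U ⊆ u ∪ w := by
    intro p hp
    by_cases hpS : p ∈ S
    · exact Or.inl (mem_iUnion₂.2 ⟨p, hpS, mem_ball_self (hρpos p hp)⟩)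
    · exact Or.inr (mem_iUnion₂.2 ⟨p, ⟨hp, hpS⟩, mem_ball_self (hρpos p hp)⟩)
  have hne1 : (U ∩ u).Nonempty := ⟨a, ha, mem_iUnion₂.2 ⟨a, haS, mem_ball_self (hρpos a ha)⟩⟩
  have hne2 : (U ∩ w).Nonempty := ⟨b, hb, mem_iUnion₂.2 ⟨b, ⟨hb, hbS⟩, mem_ball_self (hρpos b hb)⟩⟩
  obtain ⟨x, hxU, hxu, hxw⟩ := hconn u w huo hwo hcover hne1 hne2
  obtain ⟨p, hpS, hxp⟩ := mem_iUnion₂.1 hxu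
  obtain ⟨q, hqUS, hxq⟩ := mem_iUnion₂.1 hxw
  have hxS : x ∈ S := (hρiff p hpS.1 x hxp).1 hpS
  have hqS : q ∈ S := (hρiff q hqUS.1 x hxq).2 hxS
  exact hqUS.2 hqS

lemma finset_transitive [CompleteSpace E] (hrank : 1 < Module.rank ℝ E) :
    ∀ (k : ℕ) (F Q : Finset E), F.card = k → Q.card = k →
      ∃ e : E ≃ₜ E, e '' ↑F = ↑Q := by
  intro k
  induction k with
  | zero =>
    intro F Q hF hQ
    rw [Finset.card_eq_zero] at hF hQ
    subst hF; subst hQ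
    exact ⟨Homeomorph.refl E, by simp⟩
  | succ n ih =>
    intro F Q hF hQ
    classical
    obtain ⟨a, ha⟩ := Finset.card_pos.1 (by omega : 0 < F.card)
    obtain ⟨b, hb⟩ := Finset.card_pos.1 (by omega : 0 < Q.card)
    set F' := F.erase a with hF'
    set Q' := Q.erase b with hQ'
    obtain ⟨e₀, he₀⟩ := ih F' Q'
      (by rw [Finset.card_erase_of_mem ha, hF]; omega) (by rw [Finset.card_erase_of_mem hb, hQ]; omega)
    set a' := e₀ a with ha'
    have ha'Q' : a' ∉ (↑Q' : Set E) := by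
      rw [← he₀]
      rintro ⟨x, hx, hxe⟩
      have hxa : x = a := e₀.injective hxe
      subst hxa
      exact Finset.notMem_erase x F (by exact_mod_cast hx)
    have hbQ' : b ∉ (↑Q' : Set E) := by simp [hQ']
    have hconn : IsPreconnected ((↑Q' : Set E)ᶜ) :=
      ((Q'.countable_toSet).isPathConnected_compl_of_one_lt_rank hrank).isConnected.isPreconnected
    obtain ⟨τ, hτa, hτid⟩ := homog_exists ((↑Q' : Set E)ᶜ)
      (Q'.finite_toSet.isClosed.isOpen_compl) hconn ha'Q' hbQ'
    refine ⟨e₀.trans τ, ?_⟩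
    have hFins : (↑F : Set E) = insert a ↑F' := by
      rw [hF', ← Finset.coe_insert, Finset.insert_erase ha]
    have hQins : (↑Q : Set E) = insert b ↑Q' := by
      rw [hQ', ← Finset.coe_insert, Finset.insert_erase hb]
    have himg : ⇑(e₀.trans τ) = ⇑τ ∘ ⇑e₀ := rfl
    rw [himg, image_comp, hFins, image_insert_eq, he₀, image_insert_eq, hτa, hQins]
    congr 1
    refine Set.image_congr (fun q hq => hτid q (by simpa using hq)) |>.trans (image_id _)


section radial

variable (rr ε : ℝ) (hrr : 0 < rr) (hε : 0 < ε)

noncomputable def gfun (t : ℝ) : ℝ := min t (((rr + ε) / ε) * (t - rr))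
noncomputable def gfun' (s : ℝ) : ℝ := max s (rr + (ε / (rr + ε)) * s)

variable {rr ε}

lemma gfun_pos {t : ℝ} (hrr : 0 < rr) (hε : 0 < ε) (ht : rr < t) : 0 < gfun rr ε t := by
  have : 0 < (rr + ε) / ε := by positivity
  exact lt_min (by linarith) (by nlinarith)

lemma gfun_le {t : ℝ} : gfun rr ε t ≤ t := min_le_left _ _

lemma gfun_eq_of_ge {t : ℝ} (hrr : 0 < rr) (hε : 0 < ε) (ht : rr + ε ≤ t) : gfun rr ε t = t := by
  apply min_eq_left
  rw [div_mul_eq_mul_div, le_div_iff₀ hε]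
  nlinarith

lemma gfun_eq_of_le {t : ℝ} (hrr : 0 < rr) (hε : 0 < ε) (ht : t ≤ rr + ε) :
    gfun rr ε t = ((rr + ε) / ε) * (t - rr) := by
  apply min_eq_right
  rw [div_mul_eq_mul_div, div_le_iff₀ hε]
  nlinarith

lemma gfun'_ge {s : ℝ} : s ≤ gfun' rr ε s := le_max_left _ _

lemma gfun'_gt {s : ℝ} (hrr : 0 < rr) (hε : 0 < ε) (hs : 0 < s) : rr < gfun' rr ε s := by
  have : 0 < ε / (rr + ε) := by positivity
  exact lt_max_of_lt_right (by nlinarith)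

lemma gfun'_eq_of_ge {s : ℝ} (hrr : 0 < rr) (hε : 0 < ε) (hs : rr + ε ≤ s) : gfun' rr ε s = s := by
  apply max_eq_left
  rw [← sub_nonneg]
  have h1 : s - (rr + ε / (rr + ε) * s) = rr * (s - (rr + ε)) / (rr + ε) := by
    field_simp; ring
  rw [h1]
  exact div_nonneg (mul_nonneg hrr.le (by linarith)) (by positivity)

lemma gfun'_eq_of_le {s : ℝ} (hrr : 0 < rr) (hε : 0 < ε) (hs : s ≤ rr + ε) :
    gfun' rr ε s = rr + (ε / (rr + ε)) * s := by
  apply max_eq_right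
  rw [← sub_nonneg]
  have h1 : (rr + ε / (rr + ε) * s) - s = rr * ((rr + ε) - s) / (rr + ε) := by
    field_simp; ring
  rw [h1]
  exact div_nonneg (mul_nonneg hrr.le (by linarith)) (by positivity)

lemma gfun'_lt {s : ℝ} (hrr : 0 < rr) (hε : 0 < ε) (hs : s < rr + ε) : gfun' rr ε s < rr + ε := by
  rw [gfun'_eq_of_le hrr hε hs.le]
  have : (ε / (rr + ε)) * s < (ε / (rr + ε)) * (rr + ε) := by
    apply mul_lt_mul_of_pos_left hs (by positivity)
  rw [div_mul_cancel₀] at this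
  · linarith
  · positivity

lemma gfun_lt {t : ℝ} (hrr : 0 < rr) (hε : 0 < ε) (ht : t < rr + ε) : gfun rr ε t < rr + ε :=
  lt_of_le_of_lt gfun_le ht

lemma gfun'_gfun {t : ℝ} (hrr : 0 < rr) (hε : 0 < ε) (ht : rr < t) :
    gfun' rr ε (gfun rr ε t) = t := by
  rcases le_or_gt (rr + ε) t with h | h
  · rw [gfun_eq_of_ge hrr hε h, gfun'_eq_of_ge hrr hε h]
  · have h1 : gfun rr ε t = ((rr + ε) / ε) * (t - rr) := gfun_eq_of_le hrr hε h.le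
    have h2 : ((rr + ε) / ε) * (t - rr) ≤ rr + ε := h1 ▸ (gfun_lt hrr hε h).le
    rw [h1, gfun'_eq_of_le hrr hε h2]
    field_simp; ring

lemma gfun_gfun' {s : ℝ} (hrr : 0 < rr) (hε : 0 < ε) (hs : 0 < s) :
    gfun rr ε (gfun' rr ε s) = s := by
  rcases le_or_gt (rr + ε) s with h | h
  · rw [gfun'_eq_of_ge hrr hε h, gfun_eq_of_ge hrr hε h]
  · have h1 : gfun' rr ε s = rr + (ε / (rr + ε)) * s := gfun'_eq_of_le hrr hε h.le
    have h2 : rr + (ε / (rr + ε)) * s ≤ rr + ε := h1 ▸ (gfun'_lt hrr hε h).le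
    rw [h1, gfun_eq_of_le hrr hε h2]
    field_simp; ring

lemma gfun_continuous : Continuous (gfun rr ε) :=
  continuous_id.min (continuous_const.mul (continuous_id.sub continuous_const))

lemma gfun'_continuous : Continuous (gfun' rr ε) :=
  continuous_id.max (continuous_const.add (continuous_const.mul continuous_id))

end radial

lemma step_homeo {m : ℕ} (r0 : ℝ) (c : Fin m → E) (r : Fin m → ℝ)
    (hr : ∀ i, 0 < r i) (ε : ℝ) (hε : 0 < ε)
    (hin : ∀ i, ‖c i‖ + r i + ε < r0)
    (hdisj : ∀ i j, i ≠ j → r i + ε + r j < ‖c i - c j‖)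
    (k : ℕ) (hk : k < m) :
    Nonempty
      (↥{x : E | ‖x‖ < r0 ∧ ∀ i : Fin m,
          ((i : ℕ) < k → x ≠ c i) ∧ (k ≤ (i : ℕ) → r i < ‖x - c i‖)} ≃ₜ
       ↥{x : E | ‖x‖ < r0 ∧ ∀ i : Fin m,
          ((i : ℕ) < k + 1 → x ≠ c i) ∧ (k + 1 ≤ (i : ℕ) → r i < ‖x - c i‖)}) := by
  set i₀ : Fin m := ⟨k, hk⟩ with hi₀
  set cc := c i₀ with hcc
  set rr := r i₀ with hrrdef
  have hrr : 0 < rr := hr i₀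
  set A : Set E := {x : E | ‖x‖ < r0 ∧ ∀ i : Fin m,
      ((i : ℕ) < k → x ≠ c i) ∧ (k ≤ (i : ℕ) → r i < ‖x - c i‖)} with hA
  set B : Set E := {x : E | ‖x‖ < r0 ∧ ∀ i : Fin m,
      ((i : ℕ) < k + 1 → x ≠ c i) ∧ (k + 1 ≤ (i : ℕ) → r i < ‖x - c i‖)} with hB
  set F : E → E := fun x => cc + ((gfun rr ε ‖x - cc‖ / ‖x - cc‖) • (x - cc)) with hF
  set F' : E → E := fun y => cc + ((gfun' rr ε ‖y - cc‖ / ‖y - cc‖) • (y - cc)) with hF'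
  have normfact : ∀ (a : ℝ) (x : E), x ≠ cc → 0 ≤ a →
      ‖(cc + ((a / ‖x - cc‖) • (x - cc))) - cc‖ = a := by
    intro a x hx ha
    have ht : ‖x - cc‖ ≠ 0 := norm_ne_zero_iff.2 (sub_ne_zero.2 hx)
    rw [add_sub_cancel_left, norm_smul, Real.norm_eq_abs, abs_div, abs_of_nonneg ha,
      abs_norm, div_mul_cancel₀ _ ht]
  have idfact : ∀ (x : E), x ≠ cc → cc + ((‖x - cc‖ / ‖x - cc‖) • (x - cc)) = x := by
    intro x hx
    have ht : ‖x - cc‖ ≠ 0 := norm_ne_zero_iff.2 (sub_ne_zero.2 hx)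
    rw [div_self ht, one_smul]
    abel
  have hFid : ∀ x : E, rr + ε ≤ ‖x - cc‖ → F x = x := by
    intro x hx
    have hxne : x ≠ cc := by
      intro h; rw [h, sub_self, norm_zero] at hx; linarith
    show cc + ((gfun rr ε ‖x - cc‖ / ‖x - cc‖) • (x - cc)) = x
    rw [gfun_eq_of_ge hrr hε hx]
    exact idfact x hxne
  have hF'id : ∀ y : E, rr + ε ≤ ‖y - cc‖ → F' y = y := by
    intro y hy
    have hyne : y ≠ cc := by
      intro h; rw [h, sub_self, norm_zero] at hy; linarith
    show cc + ((gfun' rr ε ‖y - cc‖ / ‖y - cc‖) • (y - cc)) = y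
    rw [gfun'_eq_of_ge hrr hε hy]
    exact idfact y hyne
  have hFnorm : ∀ x : E, rr < ‖x - cc‖ → ‖F x - cc‖ = gfun rr ε ‖x - cc‖ := by
    intro x hx
    have hxne : x ≠ cc := by
      intro h; rw [h, sub_self, norm_zero] at hx; linarith
    exact normfact _ x hxne (gfun_pos hrr hε hx).le
  have hF'norm : ∀ y : E, y ≠ cc → ‖F' y - cc‖ = gfun' rr ε ‖y - cc‖ := by
    intro y hy
    have hs : 0 < ‖y - cc‖ := norm_pos_iff.2 (sub_ne_zero.2 hy)
    exact normfact _ y hy (by linarith [gfun'_gt hrr hε hs])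
  have hF'F : ∀ x : E, rr < ‖x - cc‖ → F' (F x) = x := by
    intro x hx
    have htne : ‖x - cc‖ ≠ 0 := ne_of_gt (hrr.trans hx)
    have hgne : gfun rr ε ‖x - cc‖ ≠ 0 := ne_of_gt (gfun_pos hrr hε hx)
    have e1 : F x - cc = (gfun rr ε ‖x - cc‖ / ‖x - cc‖) • (x - cc) := by
      show (cc + _) - cc = _; rw [add_sub_cancel_left]
    show cc + ((gfun' rr ε ‖F x - cc‖ / ‖F x - cc‖) • (F x - cc)) = x
    rw [hFnorm x hx, gfun'_gfun hrr hε hx, e1, smul_smul]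
    have e2 : ‖x - cc‖ / gfun rr ε ‖x - cc‖ * (gfun rr ε ‖x - cc‖ / ‖x - cc‖) = 1 := by
      field_simp
    rw [e2, one_smul]
    abel
  have hFF' : ∀ y : E, y ≠ cc → F (F' y) = y := by
    intro y hy
    have hs : 0 < ‖y - cc‖ := norm_pos_iff.2 (sub_ne_zero.2 hy)
    have hgne : gfun' rr ε ‖y - cc‖ ≠ 0 := ne_of_gt (lt_trans hrr (gfun'_gt hrr hε hs))
    have e1 : F' y - cc = (gfun' rr ε ‖y - cc‖ / ‖y - cc‖) • (y - cc) := by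
      show (cc + _) - cc = _; rw [add_sub_cancel_left]
    show cc + ((gfun rr ε ‖F' y - cc‖ / ‖F' y - cc‖) • (F' y - cc)) = y
    rw [hF'norm y hy, gfun_gfun' hrr hε hs, e1, smul_smul]
    have e2 : ‖y - cc‖ / gfun' rr ε ‖y - cc‖ * (gfun' rr ε ‖y - cc‖ / ‖y - cc‖) = 1 := by
      field_simp
    rw [e2, one_smul]
    abel
  have hmemF : ∀ x : E, x ∈ A → F x ∈ B := by
    intro x hx
    obtain ⟨hx0, hxi⟩ := hx
    have ht : rr < ‖x - cc‖ := (hxi i₀).2 (le_refl k)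
    rcases le_or_gt (rr + ε) ‖x - cc‖ with hcase | hcase
    · rw [hFid x hcase]
      refine ⟨hx0, fun i => ⟨fun hik => ?_, fun hik => (hxi i).2 (by omega)⟩⟩
      rcases Nat.lt_or_ge (i : ℕ) k with h | h
      · exact (hxi i).1 h
      · have hik0 : i = i₀ := Fin.ext (by simp [hi₀]; omega)
        subst hik0
        intro heq
        rw [heq, sub_self, norm_zero] at hcase
        linarith
    · have hnorm := hFnorm x ht
      have hgpos := gfun_pos hrr hε ht
      have hglt : gfun rr ε ‖x - cc‖ < rr + ε := gfun_lt hrr hε hcase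
      have htri : ‖F x‖ ≤ ‖cc‖ + ‖F x - cc‖ := by
        simpa using norm_add_le cc (F x - cc)
      constructor
      · have hin0 : ‖cc‖ + rr + ε < r0 := hin i₀
        linarith [htri, hglt, hnorm]
      · intro i
        by_cases hik : i = i₀
        · subst hik
          have hne : F x ≠ cc := by
            intro heq
            rw [heq, sub_self, norm_zero] at hnorm
            linarith
          exact ⟨fun _ => hne, fun hcon => absurd hcon (Nat.not_succ_le_self k)⟩
        · have hd := hdisj i₀ i (fun h => hik h.symm)
          have htri2 : ‖cc - c i‖ ≤ ‖cc - F x‖ + ‖F x - c i‖ := by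
            simpa using norm_add_le (cc - F x) (F x - c i)
          have h7 : ‖cc - F x‖ = ‖F x - cc‖ := norm_sub_rev _ _
          have hri : r i < ‖F x - c i‖ := by
            rw [h7, hnorm] at htri2
            linarith
          have hne : F x ≠ c i := by
            intro heq
            rw [heq, sub_self, norm_zero] at hri
            linarith [hr i]
          exact ⟨fun _ => hne, fun _ => hri⟩
  have hmemF' : ∀ y : E, y ∈ B → F' y ∈ A := by
    intro y hy
    obtain ⟨hy0, hyi⟩ := hy
    have hyne : y ≠ cc := (hyi i₀).1 (Nat.lt_succ_self k)
    have hs : 0 < ‖y - cc‖ := norm_pos_iff.2 (sub_ne_zero.2 hyne)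
    rcases le_or_gt (rr + ε) ‖y - cc‖ with hcase | hcase
    · rw [hF'id y hcase]
      refine ⟨hy0, fun i => ⟨fun hik => (hyi i).1 (by omega), fun hik => ?_⟩⟩
      rcases Nat.lt_or_ge (k + 1) (i : ℕ) with h | h
      · exact (hyi i).2 (by omega)
      · rcases Nat.eq_or_lt_of_le hik with h2 | h2
        · have hik0 : i = i₀ := Fin.ext (by simp [hi₀]; omega)
          subst hik0
          linarith
        · exact (hyi i).2 (by omega)
    · have hnorm := hF'norm y hyne
      have hggt : rr < gfun' rr ε ‖y - cc‖ := gfun'_gt hrr hε hs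
      have hglt : gfun' rr ε ‖y - cc‖ < rr + ε := gfun'_lt hrr hε hcase
      have htri : ‖F' y‖ ≤ ‖cc‖ + ‖F' y - cc‖ := by
        simpa using norm_add_le cc (F' y - cc)
      constructor
      · have hin0 : ‖cc‖ + rr + ε < r0 := hin i₀
        linarith [htri, hglt, hnorm]
      · intro i
        by_cases hik : i = i₀
        · subst hik
          refine ⟨fun hcon => absurd hcon (Nat.not_succ_le_self k), fun _ => ?_⟩
          rw [hnorm]
          exact hggt
        · have hd := hdisj i₀ i (fun h => hik h.symm)
          have htri2 : ‖cc - c i‖ ≤ ‖cc - F' y‖ + ‖F' y - c i‖ := by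
            simpa using norm_add_le (cc - F' y) (F' y - c i)
          have h7 : ‖cc - F' y‖ = ‖F' y - cc‖ := norm_sub_rev _ _
          have hri : r i < ‖F' y - c i‖ := by
            rw [h7, hnorm] at htri2
            linarith
          have hne : F' y ≠ c i := by
            intro heq
            rw [heq, sub_self, norm_zero] at hri
            linarith [hr i]
          exact ⟨fun _ => hne, fun _ => hri⟩
  refine ⟨⟨⟨fun x => ⟨F x.1, hmemF x.1 x.2⟩, fun y => ⟨F' y.1, hmemF' y.1 y.2⟩, ?_, ?_⟩, ?_, ?_⟩⟩
  · intro x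
    exact Subtype.ext (hF'F x.1 ((x.2.2 i₀).2 (le_refl k)))
  · intro y
    exact Subtype.ext (hFF' y.1 ((y.2.2 i₀).1 (Nat.lt_succ_self k)))
  · apply Continuous.subtype_mk
    apply continuous_const.add
    apply Continuous.smul
    · apply Continuous.div
      · exact gfun_continuous.comp ((continuous_subtype_val.sub continuous_const).norm)
      · exact (continuous_subtype_val.sub continuous_const).norm
      · exact fun x => ne_of_gt (lt_trans hrr ((x.2.2 i₀).2 (le_refl k)))
    · exact continuous_subtype_val.sub continuous_const
  · apply Continuous.subtype_mk
    apply continuous_const.add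
    apply Continuous.smul
    · apply Continuous.div
      · exact gfun'_continuous.comp ((continuous_subtype_val.sub continuous_const).norm)
      · exact (continuous_subtype_val.sub continuous_const).norm
      · exact fun y => ne_of_gt (norm_pos_iff.2 (sub_ne_zero.2 ((y.2.2 i₀).1 (Nat.lt_succ_self k))))
    · exact continuous_subtype_val.sub continuous_const

def subtypeInterHomeo {X : Type*} [TopologicalSpace X] (s : Set X) (p : X → Prop) :
    ↥{x : X | x ∈ s ∧ p x} ≃ₜ {y : ↥s // p y.1} where
  toFun x := ⟨⟨x.1, x.2.1⟩, x.2.2⟩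
  invFun y := ⟨y.1.1, y.1.2, y.2⟩
  left_inv x := rfl
  right_inv y := rfl
  continuous_toFun := Continuous.subtype_mk (Continuous.subtype_mk continuous_subtype_val _) _
  continuous_invFun := Continuous.subtype_mk (continuous_subtype_val.comp continuous_subtype_val) _

end Auxiliary

/-- The manifold interior of the sphere world `X_{n,m}` is homeomorphic to
`ℝ^n` with `m` points removed. -/
theorem stmt10 (n m : ℕ) (hn : 2 ≤ n) (r0 : ℝ) (hr0 : 0 < r0)
    (c : Fin m → EuclideanSpace ℝ (Fin n)) (r : Fin m → ℝ) (hr : ∀ i, 0 < r i)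
    (hin : ∀ i, ‖c i‖ + r i < r0)
    (hdisj : ∀ i j, i ≠ j → r i + r j < ‖c i - c j‖)
    (Q : Finset (EuclideanSpace ℝ (Fin n))) (hQ : Q.card = m) :
    Nonempty
      ((↥{x : EuclideanSpace ℝ (Fin n) | ‖x‖ < r0 ∧ ∀ i, r i < ‖x - c i‖}) ≃ₜ
        (↥((↑Q : Set (EuclideanSpace ℝ (Fin n)))ᶜ))) := by
  classical
  obtain ⟨ε, hε, hin', hdisj'⟩ : ∃ ε : ℝ, 0 < ε ∧ (∀ i, ‖c i‖ + r i + ε < r0) ∧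
      ∀ i j, i ≠ j → r i + ε + r j < ‖c i - c j‖ := by
    have h1 : ∀ᶠ ε in 𝓝[>] (0:ℝ), ∀ i, ‖c i‖ + r i + ε < r0 := by
      rw [Filter.eventually_all]
      intro i
      have hpos : 0 < r0 - ‖c i‖ - r i := by linarith [hin i]
      filter_upwards [Ioo_mem_nhdsGT_of_mem (Set.left_mem_Ico.2 hpos)] with ε hεm
      have := hεm.2; linarith
    have h2 : ∀ᶠ ε in 𝓝[>] (0:ℝ), ∀ i j, i ≠ j → r i + ε + r j < ‖c i - c j‖ := by
      rw [Filter.eventually_all]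
      intro i
      rw [Filter.eventually_all]
      intro j
      rcases eq_or_ne i j with h | h
      · filter_upwards with ε hij
        exact absurd h hij
      · have hpos : 0 < ‖c i - c j‖ - r i - r j := by linarith [hdisj i j h]
        filter_upwards [Ioo_mem_nhdsGT_of_mem (Set.left_mem_Ico.2 hpos)] with ε hεm _
        have := hεm.2; linarith
    have h3 : ∀ᶠ ε in 𝓝[>] (0:ℝ), 0 < ε := eventually_mem_nhdsWithin
    obtain ⟨ε, hh3, hh1, hh2⟩ := (h3.and (h1.and h2)).exists
    exact ⟨ε, hh3, hh1, hh2⟩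
  set Xs : ℕ → Set (EuclideanSpace ℝ (Fin n)) := fun k => {x | ‖x‖ < r0 ∧ ∀ i : Fin m,
      ((i : ℕ) < k → x ≠ c i) ∧ (k ≤ (i : ℕ) → r i < ‖x - c i‖)} with hXs
  have chain : ∀ k, k ≤ m → Nonempty (↥(Xs 0) ≃ₜ ↥(Xs k)) := by
    intro k
    induction k with
    | zero => exact fun _ => ⟨Homeomorph.refl _⟩
    | succ p ih =>
      intro hp
      obtain ⟨e1⟩ := ih (Nat.le_of_succ_le hp)
      obtain ⟨e2⟩ := step_homeo r0 c r hr ε hε hin' hdisj' p (by omega)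
      exact ⟨e1.trans e2⟩
  obtain ⟨e1⟩ := chain m le_rfl
  have hA0 : {x : (EuclideanSpace ℝ (Fin n)) | ‖x‖ < r0 ∧ ∀ i, r i < ‖x - c i‖} = Xs 0 := by
    ext x
    simp only [hXs, Set.mem_setOf_eq]
    constructor
    · rintro ⟨h1, h2⟩
      exact ⟨h1, fun i => ⟨fun h => absurd h (Nat.not_lt_zero _), fun _ => h2 i⟩⟩
    · rintro ⟨h1, h2⟩
      exact ⟨h1, fun i => (h2 i).2 (Nat.zero_le _)⟩
  have hAm : Xs m = {x : (EuclideanSpace ℝ (Fin n)) | x ∈ Metric.ball (0 : (EuclideanSpace ℝ (Fin n))) r0 ∧ ∀ i, x ≠ c i} := by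
    ext x
    simp only [hXs, Set.mem_setOf_eq, mem_ball_zero_iff]
    constructor
    · rintro ⟨h1, h2⟩
      exact ⟨h1, fun i => (h2 i).1 i.isLt⟩
    · rintro ⟨h1, h2⟩
      exact ⟨h1, fun i => ⟨fun _ => h2 i,
        fun h => absurd (lt_of_lt_of_le i.isLt h) (lt_irrefl _)⟩⟩
  have hr0ne : (r0 : ℝ) ≠ 0 := ne_of_gt hr0
  let sc : (EuclideanSpace ℝ (Fin n)) ≃ₜ (EuclideanSpace ℝ (Fin n)) := Homeomorph.smulOfNeZero (r0⁻¹ : ℝ) (inv_ne_zero hr0ne)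
  have hsc : ⇑sc = fun x : (EuclideanSpace ℝ (Fin n)) => (r0⁻¹ : ℝ) • x := rfl
  have hscim : ⇑sc '' Metric.ball (0 : (EuclideanSpace ℝ (Fin n))) r0 = Metric.ball (0 : (EuclideanSpace ℝ (Fin n))) 1 := by
    rw [hsc]
    rw [Set.image_smul, _root_.smul_ball (inv_ne_zero hr0ne), smul_zero, norm_inv, Real.norm_eq_abs,
      abs_of_pos hr0, inv_mul_cancel₀ hr0ne]
  let ψ : ↥(Metric.ball (0 : (EuclideanSpace ℝ (Fin n))) r0) ≃ₜ (EuclideanSpace ℝ (Fin n)) :=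
    ((sc.image _).trans (Homeomorph.setCongr hscim)).trans (Homeomorph.unitBall (E := EuclideanSpace ℝ (Fin n))).symm
  have hcball : ∀ i, c i ∈ Metric.ball (0 : (EuclideanSpace ℝ (Fin n))) r0 := fun i =>
    mem_ball_zero_iff.2 (by linarith [hin' i, hr i, hε])
  let d2 : {y : ↥(Metric.ball (0 : (EuclideanSpace ℝ (Fin n))) r0) // ∀ i, y.1 ≠ c i} ≃ₜ
      {z : (EuclideanSpace ℝ (Fin n)) // ∀ i, (ψ.symm z).1 ≠ c i} :=
    ψ.subtype (fun y => by rw [ψ.symm_apply_apply])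
  have cinj : Function.Injective c := by
    intro i j hij
    by_contra h
    have hd := hdisj i j h
    rw [hij, sub_self, norm_zero] at hd
    linarith [hr i, hr j]
  let F' : Finset (EuclideanSpace ℝ (Fin n)) := Finset.image (fun i => ψ ⟨c i, hcball i⟩) Finset.univ
  have hinj2 : Function.Injective (fun i => ψ ⟨c i, hcball i⟩) := by
    intro i j hij
    simp only at hij
    have := ψ.injective hij
    rw [Subtype.mk.injEq] at this
    exact cinj this
  have hF'card : F'.card = m := by
    rw [Finset.card_image_of_injective _ hinj2, Finset.card_univ, Fintype.card_fin]
  have hsetEq : {z : (EuclideanSpace ℝ (Fin n)) | ∀ i, (ψ.symm z).1 ≠ c i} = (↑F' : Set (EuclideanSpace ℝ (Fin n)))ᶜ := by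
    ext z
    simp only [Set.mem_setOf_eq, Set.mem_compl_iff]
    constructor
    · intro h hz
      obtain ⟨i, -, hi⟩ := Finset.mem_image.1 (Finset.mem_coe.1 hz)
      apply h i
      rw [← hi, ψ.symm_apply_apply]
    · intro h i heq
      apply h
      have h5 : ψ.symm z = ⟨c i, hcball i⟩ := Subtype.ext heq
      have h6 : z = ψ ⟨c i, hcball i⟩ := by rw [← h5, ψ.apply_symm_apply]
      exact Finset.mem_coe.2 (Finset.mem_image.2 ⟨i, Finset.mem_univ i, h6.symm⟩)
  have hrank : 1 < Module.rank ℝ (EuclideanSpace ℝ (Fin n)) := by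
    rw [← Module.finrank_eq_rank, finrank_euclideanSpace_fin]
    exact_mod_cast (by omega : 1 < n)
  obtain ⟨τ, hτ⟩ := finset_transitive hrank m F' Q hF'card hQ
  let d4 : ↥((↑F' : Set (EuclideanSpace ℝ (Fin n)))ᶜ) ≃ₜ ↥((↑Q : Set (EuclideanSpace ℝ (Fin n)))ᶜ) :=
    (τ.image _).trans (Homeomorph.setCongr (by rw [Set.image_compl_eq τ.bijective, hτ]))
  exact ⟨(((Homeomorph.setCongr hA0).trans e1).trans (Homeomorph.setCongr hAm)).trans <|
    (subtypeInterHomeo _ _).trans <| d2.trans <| (Homeomorph.setCongr hsetEq).trans d4⟩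
end

section
/- Let M be a nonempty connected compact topological n-dimensional manifold with nonempty boundary and let Int(M) = M − ∂M. Then there exists a continuous map H : M × [0,1] → M such that H(·,1) is the identity map of M, H(·,0) maps M into Int(M), the map H(·,t) : M → M is injective for every t ∈ [0,1], and H restricts to a map Int(M) × [0,1] → Int(M). -/
open scoped Topology

/-- Interior of a topological manifold with boundary: the set of points having
an open neighborhood homeomorphic to `ℝ^n`. -/
def mfdInterior (n : ℕ) (M : Type*) [TopologicalSpace M] : Set M :=
  {x | ∃ U : Set M, IsOpen U ∧ x ∈ U ∧ Nonempty (U ≃ₜ EuclideanSpace ℝ (Fin n))}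

open Metric Set unitInterval

noncomputable section
namespace Stmt13Aux
variable {n : ℕ} [NeZero n]

/-! Euclidean push -/

def gf (c : EuclideanSpace ℝ (Fin n)) (r : ℝ) (y : EuclideanSpace ℝ (Fin n)) : ℝ :=
  max 0 (r - dist y c) / 2

lemma gf_nonneg (c : EuclideanSpace ℝ (Fin n)) (r y) : 0 ≤ gf c r y := by
  unfold gf; positivity

lemma gf_le (c : EuclideanSpace ℝ (Fin n)) {r : ℝ} (hr : 0 ≤ r) (y) : gf c r y ≤ r / 2 := by
  unfold gf
  have : max 0 (r - dist y c) ≤ r := max_le hr (by linarith [dist_nonneg (x := y) (y := c)])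
  linarith

lemma gf_pos (c : EuclideanSpace ℝ (Fin n)) {r : ℝ} {y} (h : dist y c < r) : 0 < gf c r y := by
  unfold gf
  have : 0 < r - dist y c := by linarith
  have := le_max_right (0:ℝ) (r - dist y c)
  positivity

lemma gf_eq_zero (c : EuclideanSpace ℝ (Fin n)) {r : ℝ} {y} (h : r ≤ dist y c) : gf c r y = 0 := by
  unfold gf
  rw [max_eq_left (by linarith)]; simp

lemma gf_lip (c : EuclideanSpace ℝ (Fin n)) (r : ℝ) (y y') :
    |gf c r y - gf c r y'| ≤ dist y y' / 2 := by
  unfold gf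
  rw [div_sub_div_same, abs_div, abs_of_pos (show (0:ℝ) < 2 by norm_num)]
  have h1 : |max 0 (r - dist y c) - max 0 (r - dist y' c)| ≤ |(r - dist y c) - (r - dist y' c)| := by
    rw [max_comm 0 (r - dist y c), max_comm 0 (r - dist y' c)]
    exact abs_max_sub_max_le_abs _ _ _
  have h2 : |(r - dist y c) - (r - dist y' c)| = |dist y' c - dist y c| := by ring_nf
  have h3 : |dist y' c - dist y c| ≤ dist y' y := abs_dist_sub_le _ _ _
  rw [dist_comm y' y] at h3
  have := h1.trans (h2 ▸ h3)
  linarith [abs_nonneg (max 0 (r - dist y c) - max 0 (r - dist y' c))]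

lemma gf_continuous (c : EuclideanSpace ℝ (Fin n)) (r : ℝ) : Continuous (gf c r) := by
  unfold gf; fun_prop

def hf (c : EuclideanSpace ℝ (Fin n)) (r s : ℝ) (y : EuclideanSpace ℝ (Fin n)) :
    EuclideanSpace ℝ (Fin n) :=
  y + (s * gf c r y) • EuclideanSpace.single 0 1

lemma hf_coord (c : EuclideanSpace ℝ (Fin n)) (r s : ℝ) (y) :
    hf c r s y 0 = y 0 + s * gf c r y := by
  unfold hf; simp [EuclideanSpace.single_apply]

lemma hf_dist_self (c : EuclideanSpace ℝ (Fin n)) (r s : ℝ) (y) :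
    dist (hf c r s y) y = |s * gf c r y| := by
  unfold hf
  rw [dist_eq_norm, add_sub_cancel_left, norm_smul, EuclideanSpace.norm_single]
  rw [norm_one, mul_one, Real.norm_eq_abs]

lemma hf_fix (c : EuclideanSpace ℝ (Fin n)) {r s : ℝ} {y} (h : s * gf c r y = 0) :
    hf c r s y = y := by
  unfold hf; rw [h, zero_smul, add_zero]

lemma hf_inj (c : EuclideanSpace ℝ (Fin n)) {r s : ℝ} (hs0 : 0 ≤ s) (hs1 : s ≤ 1) {y y'}
    (h : hf c r s y = hf c r s y') : y = y' := by
  have key : y - y' = (s * gf c r y' - s * gf c r y) • EuclideanSpace.single 0 1 := by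
    rw [sub_smul]
    have h2 : y - y' = (y + (s * gf c r y) • EuclideanSpace.single 0 1)
        - (y' + (s * gf c r y) • EuclideanSpace.single 0 1) := by abel
    rw [h2, show y + (s * gf c r y) • EuclideanSpace.single 0 1 = hf c r s y from rfl, h]
    unfold hf; abel
  have hnorm : ‖y - y'‖ = |s * gf c r y' - s * gf c r y| := by
    rw [key, norm_smul, EuclideanSpace.norm_single, norm_one, mul_one, Real.norm_eq_abs]
  have habs : |s * gf c r y' - s * gf c r y| = s * |gf c r y' - gf c r y| := by
    rw [← mul_sub, abs_mul, abs_of_nonneg hs0]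
  rw [habs] at hnorm
  have hl := gf_lip c r y' y
  have hle : ‖y - y'‖ ≤ dist y' y / 2 := by
    rw [hnorm]
    calc s * |gf c r y' - gf c r y| ≤ 1 * |gf c r y' - gf c r y| :=
          mul_le_mul_of_nonneg_right hs1 (abs_nonneg _)
      _ ≤ dist y' y / 2 := by rw [one_mul]; exact hl
  rw [dist_comm, dist_eq_norm] at hle
  have := norm_nonneg (y - y')
  have hz : ‖y - y'‖ = 0 := by linarith
  exact sub_eq_zero.mp (norm_eq_zero.mp hz)

lemma hf_continuous (c : EuclideanSpace ℝ (Fin n)) (r : ℝ) :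
    Continuous fun p : ℝ × EuclideanSpace ℝ (Fin n) => hf c r p.1 p.2 := by
  unfold hf
  exact continuous_snd.add
    (((continuous_fst.mul ((gf_continuous c r).comp continuous_snd))).smul continuous_const)

/-! Interior via charts -/

variable {M : Type} [TopologicalSpace M]

lemma coord_abs_le (v : EuclideanSpace ℝ (Fin n)) (i : Fin n) : |v i| ≤ ‖v‖ := by
  have := abs_real_inner_le_norm (EuclideanSpace.single i (1:ℝ)) v
  simpa [EuclideanSpace.inner_single_left, EuclideanSpace.norm_single] using this

lemma coord_dist_le (v w : EuclideanSpace ℝ (Fin n)) (i : Fin n) : |v i - w i| ≤ dist v w := by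
  have := coord_abs_le (v - w) i
  rwa [dist_eq_norm, ← PiLp.sub_apply] at *

theorem isOpen_mfdInterior : IsOpen (mfdInterior n M) := by
  rw [isOpen_iff_forall_mem_open]
  rintro x ⟨U, hU, hxU, he⟩
  exact ⟨U, fun u hu => ⟨U, hU, hu, he⟩, hU, hxU⟩

theorem mem_mfdInterior_of_chart (φ : OpenPartialHomeomorph M (EuclideanHalfSpace n)) {x : M}
    (hx : x ∈ φ.source) (hpos : 0 < (φ x).val 0) : x ∈ mfdInterior n M := by
  obtain ⟨V, hVopen, hVeq⟩ : ∃ V, IsOpen V ∧ Subtype.val ⁻¹' V = φ.target :=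
    isOpen_induced_iff.mp φ.open_target
  have hc0 : (φ x).val ∈ V := by
    have := φ.map_source hx
    rw [← hVeq] at this; exact this
  obtain ⟨ε, hε, hball⟩ := Metric.isOpen_iff.mp hVopen _ hc0
  set ε' : ℝ := min ε ((φ x).val 0) with hε'def
  have hε' : 0 < ε' := lt_min hε hpos
  set B : Set (EuclideanSpace ℝ (Fin n)) := ball (φ x).val ε' with hBdef
  have hBpos : ∀ z ∈ B, 0 < z 0 := by
    intro z hz
    have h1 : |z 0 - (φ x).val 0| ≤ dist z (φ x).val := coord_dist_le _ _ _
    have h2 : dist z (φ x).val < ε' := mem_ball.mp hz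
    have h3 : ε' ≤ (φ x).val 0 := min_le_right _ _
    have := abs_lt.mp (lt_of_le_of_lt h1 h2)
    linarith [this.1]
  have hBV : B ⊆ V := fun z hz => hball (mem_ball.mp hz |>.trans_le (min_le_left _ _))
  have hBt : Subtype.val ⁻¹' B ⊆ φ.target := by
    intro w hw; rw [← hVeq]; exact hBV hw
  have hBo : IsOpen (Subtype.val ⁻¹' B : Set (EuclideanHalfSpace n)) :=
    isOpen_ball.preimage continuous_subtype_val
  set U : Set M := φ.source ∩ φ ⁻¹' (Subtype.val ⁻¹' B) with hUdef
  have hUopen : IsOpen U := φ.isOpen_inter_preimage hBo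
  have hUsub : U ⊆ φ.source := inter_subset_left
  have hxU : x ∈ U := ⟨hx, by simp [hBdef, mem_ball_self hε']⟩
  refine ⟨U, hUopen, hxU, ?_⟩
  set e := φ.restrOpen U hUopen with hedef
  have hsrc : U = e.source := by
    rw [hedef, OpenPartialHomeomorph.restrOpen_source]
    exact (inter_eq_self_of_subset_right hUsub).symm
  have htgt : e.target = Subtype.val ⁻¹' B := by
    have h0 : e.target = φ.target ∩ φ.symm ⁻¹' U := rfl
    rw [h0]
    ext w
    constructor
    · rintro ⟨hwt, hws⟩
      have := (hws : φ.symm w ∈ U).2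
      rwa [mem_preimage, φ.right_inv hwt] at this
    · intro hw
      have hwt : w ∈ φ.target := hBt hw
      exact ⟨hwt, ⟨φ.map_target hwt, by rw [mem_preimage, mem_preimage, φ.right_inv hwt]; exact hw⟩⟩
  have h1 : U ≃ₜ (Subtype.val ⁻¹' B : Set (EuclideanHalfSpace n)) :=
    (Homeomorph.setCongr hsrc).trans (e.toHomeomorphSourceTarget.trans (Homeomorph.setCongr htgt))
  have h2 : (Subtype.val ⁻¹' B : Set (EuclideanHalfSpace n)) ≃ₜ (B : Set (EuclideanSpace ℝ (Fin n))) :=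
    { toFun := fun w => ⟨w.1.1, w.2⟩
      invFun := fun z => ⟨⟨z.1, le_of_lt (hBpos z.1 z.2)⟩, z.2⟩
      left_inv := fun w => rfl
      right_inv := fun z => rfl
      continuous_toFun := (continuous_subtype_val.comp continuous_subtype_val).subtype_mk _
      continuous_invFun := (continuous_subtype_val.subtype_mk _).subtype_mk _ }
  have h3 : (B : Set (EuclideanSpace ℝ (Fin n))) ≃ₜ EuclideanSpace ℝ (Fin n) := by
    have e3 := (OpenPartialHomeomorph.univBall (φ x).val ε').toHomeomorphSourceTarget
    rw [OpenPartialHomeomorph.univBall_source, OpenPartialHomeomorph.univBall_target _ hε'] at e3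
    exact e3.symm.trans (Homeomorph.Set.univ _)
  exact ⟨h1.trans (h2.trans h3)⟩

theorem coord_eq_zero_of_not_mem (φ : OpenPartialHomeomorph M (EuclideanHalfSpace n)) {x : M}
    (hx : x ∈ φ.source) (hi : x ∉ mfdInterior n M) : (φ x).val 0 = 0 := by
  rcases lt_or_eq_of_le (φ x).2 with h | h
  · exact absurd (mem_mfdInterior_of_chart φ hx h) hi
  · exact h.symm

/-! Good charts and pushes -/

structure GoodChart (n : ℕ) [NeZero n] (M : Type) [TopologicalSpace M] where
  φ : OpenPartialHomeomorph M (EuclideanHalfSpace n)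
  c : EuclideanSpace ℝ (Fin n)
  r : ℝ
  hr : 0 < r
  hsub : ∀ z : EuclideanSpace ℝ (Fin n), ∀ hz : 0 ≤ z 0, dist z c < 3 * r →
    (⟨z, hz⟩ : EuclideanHalfSpace n) ∈ φ.target

namespace GoodChart

variable (D : GoodChart n M)

/-- lifted push on the half-space -/
def lift (y : EuclideanHalfSpace n) (s : unitInterval) : EuclideanHalfSpace n :=
  ⟨hf D.c D.r s y.val, by
    rw [hf_coord]
    have := gf_nonneg D.c D.r y.val
    have hs := s.2.1
    have := y.2
    positivity⟩

lemma lift_mem_target {y : EuclideanHalfSpace n} (hy : y ∈ D.φ.target) (s : unitInterval) :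
    D.lift y s ∈ D.φ.target := by
  rcases le_or_gt D.r (dist y.val D.c) with h | h
  · have : D.lift y s = y := by
      apply Subtype.ext
      show hf D.c D.r s y.val = y.val
      exact hf_fix _ (by rw [gf_eq_zero _ h, mul_zero])
    rwa [this]
  · have hd : dist (hf D.c D.r s y.val) D.c < 3 * D.r := by
      have h1 : dist (hf D.c D.r s y.val) y.val = |(s:ℝ) * gf D.c D.r y.val| := hf_dist_self _ _ _ _
      have h2 : |(s:ℝ) * gf D.c D.r y.val| ≤ D.r / 2 := by
        rw [abs_mul, abs_of_nonneg s.2.1, abs_of_nonneg (gf_nonneg _ _ _)]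
        calc (s:ℝ) * gf D.c D.r y.val ≤ 1 * gf D.c D.r y.val :=
              mul_le_mul_of_nonneg_right s.2.2 (gf_nonneg _ _ _)
          _ ≤ D.r / 2 := by rw [one_mul]; exact gf_le _ D.hr.le _
      calc dist (hf D.c D.r s y.val) D.c ≤ dist (hf D.c D.r s y.val) y.val + dist y.val D.c :=
            dist_triangle _ _ _
        _ ≤ D.r / 2 + dist y.val D.c := by rw [h1]; linarith
        _ < 3 * D.r := by linarith [D.hr]
    exact D.hsub _ (D.lift y s).2 hd

open scoped Classical in
/-- the push on `M`, with push amount `s` (`s = 0` is the identity) -/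
def push (p : M × unitInterval) : M :=
  if hx : p.1 ∈ D.φ.source then D.φ.symm (D.lift (D.φ p.1) p.2) else p.1

lemma push_of_not_mem {x : M} (hx : x ∉ D.φ.source) (s : unitInterval) :
    D.push (x, s) = x := dif_neg hx

lemma push_of_mem {x : M} (hx : x ∈ D.φ.source) (s : unitInterval) :
    D.push (x, s) = D.φ.symm (D.lift (D.φ x) s) := dif_pos hx

lemma push_zero (x : M) : D.push (x, 0) = x := by
  by_cases hx : x ∈ D.φ.source
  · rw [push_of_mem D hx]
    have : D.lift (D.φ x) 0 = D.φ x := by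
      apply Subtype.ext
      show hf D.c D.r ((0 : unitInterval) : ℝ) (D.φ x).val = (D.φ x).val
      exact hf_fix _ (by norm_num)
    rw [this, D.φ.left_inv hx]
  · exact push_of_not_mem D hx 0

lemma push_mem_source {x : M} (hx : x ∈ D.φ.source) (s : unitInterval) :
    D.push (x, s) ∈ D.φ.source := by
  rw [push_of_mem D hx]
  exact D.φ.map_target (D.lift_mem_target (D.φ.map_source hx) s)

lemma push_inj (s : unitInterval) : Function.Injective fun x => D.push (x, s) := by
  intro x y hxy
  simp only at hxy
  by_cases hx : x ∈ D.φ.source <;> by_cases hy : y ∈ D.φ.source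
  · rw [push_of_mem D hx, push_of_mem D hy] at hxy
    have h1 : D.lift (D.φ x) s ∈ D.φ.target := D.lift_mem_target (D.φ.map_source hx) s
    have h2 : D.lift (D.φ y) s ∈ D.φ.target := D.lift_mem_target (D.φ.map_source hy) s
    have h3 : D.lift (D.φ x) s = D.lift (D.φ y) s := by
      have := congrArg D.φ hxy
      rwa [D.φ.right_inv h1, D.φ.right_inv h2] at this
    have h4 : hf D.c D.r s (D.φ x).val = hf D.c D.r s (D.φ y).val := congrArg Subtype.val h3
    have h5 : (D.φ x).val = (D.φ y).val := hf_inj _ s.2.1 s.2.2 h4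
    have h6 : D.φ x = D.φ y := Subtype.ext h5
    rw [← D.φ.left_inv hx, ← D.φ.left_inv hy, h6]
  · exfalso
    have := D.push_mem_source hx s
    rw [hxy, push_of_not_mem D hy] at this
    exact hy this
  · exfalso
    have := D.push_mem_source hy s
    rw [← hxy, push_of_not_mem D hx] at this
    exact hx this
  · rwa [push_of_not_mem D hx, push_of_not_mem D hy] at hxy

lemma push_dichotomy (x : M) (s : unitInterval) :
    D.push (x, s) = x ∨ D.push (x, s) ∈ mfdInterior n M := by
  by_cases hx : x ∈ D.φ.source
  · rcases eq_or_lt_of_le (mul_nonneg s.2.1 (gf_nonneg D.c D.r (D.φ x).val)) with h | h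
    · left
      rw [push_of_mem D hx]
      have : D.lift (D.φ x) s = D.φ x := Subtype.ext (hf_fix _ h.symm)
      rw [this, D.φ.left_inv hx]
    · right
      rw [push_of_mem D hx]
      set w := D.lift (D.φ x) s with hw
      have hwt : w ∈ D.φ.target := D.lift_mem_target (D.φ.map_source hx) s
      apply mem_mfdInterior_of_chart D.φ (D.φ.map_target hwt)
      rw [D.φ.right_inv hwt]
      show 0 < (hf D.c D.r s (D.φ x).val) 0
      rw [hf_coord]
      have := (D.φ x).2
      linarith
  · left; exact push_of_not_mem D hx s

/-- the region guaranteed to be pushed into the interior -/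
def W : Set M := D.φ.source ∩ D.φ ⁻¹' {y : EuclideanHalfSpace n | dist y.val D.c < D.r}

lemma W_open : IsOpen D.W :=
  D.φ.isOpen_inter_preimage (isOpen_ball.preimage continuous_subtype_val)

lemma push_boundary {x : M} (hx : x ∈ D.W) (hi : x ∉ mfdInterior n M) :
    D.push (x, 1) ∈ mfdInterior n M := by
  rcases D.push_dichotomy x 1 with h | h
  · exfalso
    rw [push_of_mem D hx.1] at h
    have hwt : D.lift (D.φ x) 1 ∈ D.φ.target := D.lift_mem_target (D.φ.map_source hx.1) 1
    have := congrArg D.φ h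
    rw [D.φ.right_inv hwt] at this
    have h4 : hf D.c D.r ((1 : unitInterval) : ℝ) (D.φ x).val = (D.φ x).val :=
      congrArg Subtype.val this
    have h5 := congrArg (fun v => v 0) h4
    simp only [hf_coord] at h5
    have hz : (D.φ x).val 0 = 0 := coord_eq_zero_of_not_mem D.φ hx.1 hi
    have hgp : 0 < gf D.c D.r (D.φ x).val := gf_pos _ hx.2
    rw [hz] at h5
    norm_num at h5
    linarith
  · exact h

lemma push_continuous [T2Space M] : Continuous D.push := by
  rw [continuous_iff_continuousAt]
  rintro ⟨x, s⟩
  by_cases hx : x ∈ D.φ.source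
  · have hev : ∀ᶠ q : M × unitInterval in nhds (x, s),
        D.push q = D.φ.symm (D.lift (D.φ q.1) q.2) := by
      have : D.φ.source ×ˢ (univ : Set unitInterval) ∈ nhds (x, s) :=
        prod_mem_nhds (D.φ.open_source.mem_nhds hx) Filter.univ_mem
      filter_upwards [this] with q hq
      exact dif_pos hq.1
    have hc : ContinuousAt (fun q : M × unitInterval => D.φ.symm (D.lift (D.φ q.1) q.2)) (x, s) := by
      have hlift : ContinuousAt (fun q : M × unitInterval => D.lift (D.φ q.1) q.2) (x, s) := by
        have hind : Topology.IsInducing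
            (Subtype.val : EuclideanHalfSpace n → EuclideanSpace ℝ (Fin n)) := ⟨rfl⟩
        refine (hind.continuousAt_iff
          (f := fun q : M × unitInterval => D.lift (D.φ q.1) q.2) (x := (x, s))).mpr ?_
        show ContinuousAt (fun q : M × unitInterval => hf D.c D.r (q.2 : ℝ) (D.φ q.1).val) (x, s)
        have h2a : ContinuousAt (fun q : M × unitInterval => (q.2 : ℝ)) (x, s) :=
          Continuous.continuousAt (continuous_subtype_val.comp continuous_snd)
        have h2b : ContinuousAt (fun q : M × unitInterval => (D.φ q.1).val) (x, s) :=
          ContinuousAt.comp (Continuous.continuousAt continuous_subtype_val)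
            (ContinuousAt.comp (D.φ.continuousAt hx) (Continuous.continuousAt continuous_fst))
        have h1 : ContinuousAt (fun q : M × unitInterval => ((q.2 : ℝ), (D.φ q.1).val)) (x, s) :=
          ContinuousAt.prodMk h2a h2b
        exact ContinuousAt.comp (g := fun p : ℝ × EuclideanSpace ℝ (Fin n) => hf D.c D.r p.1 p.2) (Continuous.continuousAt (hf_continuous D.c D.r)) h1
      have hmem : D.lift (D.φ x) s ∈ D.φ.target := D.lift_mem_target (D.φ.map_source hx) s
      show ContinuousAt (D.φ.symm ∘ fun q : M × unitInterval => D.lift (D.φ q.1) q.2) (x, s)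
      exact ContinuousAt.comp (D.φ.continuousAt_symm hmem) hlift
    exact hc.congr (Filter.EventuallyEq.symm hev)
  · -- away from the compact support, push is the first projection
    set Kt : Set (EuclideanHalfSpace n) := {y | dist y.val D.c ≤ D.r} with hKt
    have hKtc : IsCompact Kt := by
      have hcl : IsClosed {z : EuclideanSpace ℝ (Fin n) | 0 ≤ z 0} :=
        isClosed_le continuous_const ((EuclideanSpace.proj (0 : Fin n)).continuous)
      have hemb : Topology.IsClosedEmbedding (Subtype.val : EuclideanHalfSpace n → EuclideanSpace ℝ (Fin n)) :=
        Topology.IsClosedEmbedding.subtypeVal hcl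
      have : Kt = Subtype.val ⁻¹' (closedBall D.c D.r) := by
        ext y; simp [hKt, Metric.mem_closedBall]
      rw [this]
      exact hemb.isCompact_preimage (isCompact_closedBall _ _)
    have hKtt : Kt ⊆ D.φ.target := by
      intro y hy
      have : dist y.val D.c < 3 * D.r := lt_of_le_of_lt hy (by linarith [D.hr])
      have := D.hsub y.val y.2 this
      simpa using this
    set S : Set M := D.φ.symm '' Kt with hS
    have hSc : IsCompact S := hKtc.image_of_continuousOn (D.φ.continuousOn_symm.mono hKtt)
    have hScl : IsClosed S := hSc.isClosed
    have hxS : x ∉ S := by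
      intro hmem
      rcases hmem with ⟨y, hy, rfl⟩
      exact hx (D.φ.map_target (hKtt hy))
    have hev : ∀ᶠ q : M × unitInterval in nhds (x, s), D.push q = q.1 := by
      have : Sᶜ ×ˢ (univ : Set unitInterval) ∈ nhds (x, s) :=
        prod_mem_nhds (hScl.isOpen_compl.mem_nhds hxS) Filter.univ_mem
      filter_upwards [this] with q hq
      by_cases hq1 : q.1 ∈ D.φ.source
      · have hfar : D.r < dist (D.φ q.1).val D.c := by
          by_contra hle
          push_neg at hle
          have : D.φ q.1 ∈ Kt := hle
          have : q.1 ∈ S := ⟨D.φ q.1, this, D.φ.left_inv hq1⟩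
          exact hq.1 this
        have : D.lift (D.φ q.1) q.2 = D.φ q.1 := by
          apply Subtype.ext
          exact hf_fix _ (by rw [gf_eq_zero _ hfar.le, mul_zero])
        show D.push q = q.1
        rw [show D.push q = D.push (q.1, q.2) from rfl, push_of_mem D hq1, this, D.φ.left_inv hq1]
      · exact dif_neg hq1
    exact (Continuous.continuousAt (continuous_fst) :
      ContinuousAt (fun q : M × unitInterval => q.1) (x, s)).congr (Filter.EventuallyEq.symm hev)

end GoodChart

/-! Existence of good charts at boundary points -/

lemma exists_goodChart [ChartedSpace (EuclideanHalfSpace n) M] (b : M) :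
    ∃ D : GoodChart n M, b ∈ D.W := by
  set φ := chartAt (EuclideanHalfSpace n) b with hφ
  have hb : b ∈ φ.source := mem_chart_source _ b
  obtain ⟨V, hVopen, hVeq⟩ : ∃ V, IsOpen V ∧ Subtype.val ⁻¹' V = φ.target :=
    isOpen_induced_iff.mp φ.open_target
  have hc0 : (φ b).val ∈ V := by
    have := φ.map_source hb
    rw [← hVeq] at this; exact this
  obtain ⟨ε, hε, hball⟩ := Metric.isOpen_iff.mp hVopen _ hc0
  refine ⟨⟨φ, (φ b).val, ε / 3, by linarith, ?_⟩, ?_⟩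
  · intro z hz hd
    have : z ∈ V := hball (by rw [mem_ball]; linarith)
    rw [← hVeq]; exact this
  · exact ⟨hb, by simp only [GoodChart.W, mem_preimage, mem_setOf_eq, dist_self]; positivity⟩

/-! Composing pushes along a list of good charts -/

def pushList : List (GoodChart n M) → M × unitInterval → M
  | [], p => p.1
  | D :: l, p => D.push (pushList l p, unitInterval.symm p.2)

lemma pushList_continuous [T2Space M] (l : List (GoodChart n M)) : Continuous (pushList l) := by
  induction l with
  | nil => exact continuous_fst
  | cons D l ih =>
    show Continuous fun p => D.push (pushList l p, unitInterval.symm p.2)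
    exact D.push_continuous.comp (ih.prodMk (unitInterval.continuous_symm.comp continuous_snd))

lemma pushList_one (l : List (GoodChart n M)) (x : M) : pushList l (x, 1) = x := by
  induction l with
  | nil => rfl
  | cons D l ih =>
    show D.push (pushList l (x, 1), unitInterval.symm 1) = x
    rw [ih, unitInterval.symm_one, D.push_zero]

lemma pushList_inj (l : List (GoodChart n M)) (t : unitInterval) :
    Function.Injective fun x => pushList l (x, t) := by
  induction l with
  | nil => exact fun x y h => h
  | cons D l ih =>
    intro x y hxy
    exact ih (D.push_inj (unitInterval.symm t) hxy)

lemma pushList_dichotomy (l : List (GoodChart n M)) (x : M) (t : unitInterval) :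
    pushList l (x, t) = x ∨ pushList l (x, t) ∈ mfdInterior n M := by
  induction l with
  | nil => exact Or.inl rfl
  | cons D l ih =>
    show D.push (pushList l (x, t), unitInterval.symm t) = x ∨
      D.push (pushList l (x, t), unitInterval.symm t) ∈ mfdInterior n M
    rcases D.push_dichotomy (pushList l (x, t)) (unitInterval.symm t) with h | h
    · rw [h]; exact ih
    · exact Or.inr h

lemma pushList_interior (l : List (GoodChart n M)) {x : M} (hx : x ∈ mfdInterior n M)
    (t : unitInterval) : pushList l (x, t) ∈ mfdInterior n M := by
  rcases pushList_dichotomy l x t with h | h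
  · rwa [h]
  · exact h

lemma pushList_boundary (l : List (GoodChart n M)) {x : M} (hx : x ∉ mfdInterior n M)
    (hcov : ∃ D ∈ l, x ∈ D.W) : pushList l (x, 0) ∈ mfdInterior n M := by
  induction l with
  | nil => simp at hcov
  | cons D l ih =>
    show D.push (pushList l (x, 0), unitInterval.symm 0) ∈ mfdInterior n M
    rcases pushList_dichotomy l x 0 with h | h
    · rw [h]
      rcases hcov with ⟨D', hD', hxW⟩
      rcases List.mem_cons.mp hD' with rfl | hmem
      · rw [unitInterval.symm_zero]
        exact D'.push_boundary hxW hx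
      · exact absurd (h ▸ ih ⟨D', hmem, hxW⟩) hx
    · rcases D.push_dichotomy (pushList l (x, 0)) (unitInterval.symm 0) with h2 | h2
      · rwa [h2]
      · exact h2

end Stmt13Aux

open Stmt13Aux in
/-- A compact manifold with boundary admits an isotopy pushing it into its
interior: a continuous `H : M × [0,1] → M` with `H(·,1) = id`, `H(·,0)`
mapping into `Int(M)`, each `H(·,t)` injective, and `H` preserving `Int(M)`. -/
theorem stmt13 (n : ℕ) [NeZero n] (M : Type) [TopologicalSpace M] [T2Space M]
    [SecondCountableTopology M] [CompactSpace M] [ConnectedSpace M]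
    [ChartedSpace (EuclideanHalfSpace n) M]
    (hbd : ((mfdInterior n M)ᶜ : Set M).Nonempty) :
    ∃ H : C(M × unitInterval, M),
      (∀ x, H (x, 1) = x) ∧
      (∀ x, H (x, 0) ∈ mfdInterior n M) ∧
      (∀ t : unitInterval, Function.Injective fun x => H (x, t)) ∧
      (∀ x ∈ mfdInterior n M, ∀ t : unitInterval, H (x, t) ∈ mfdInterior n M) := by
  classical
  have hK : IsCompact ((mfdInterior n M)ᶜ : Set M) :=
    (isOpen_mfdInterior.isClosed_compl).isCompact
  choose D hD using fun b : M => exists_goodChart (M := M) (n := n) b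
  obtain ⟨t, ht⟩ := hK.elim_finite_subcover (fun b : M => (D b).W)
    (fun b => (D b).W_open) (fun x _ => mem_iUnion.mpr ⟨x, hD x⟩)
  set L : List (GoodChart n M) := t.toList.map D with hL
  have hcov : ∀ x ∈ ((mfdInterior n M)ᶜ : Set M), ∃ D' ∈ L, x ∈ D'.W := by
    intro x hx
    obtain ⟨b, hb, hxW⟩ := mem_iUnion₂.mp (ht hx)
    exact ⟨D b, List.mem_map.mpr ⟨b, Finset.mem_toList.mpr hb, rfl⟩, hxW⟩
  refine ⟨⟨pushList L, pushList_continuous L⟩, ?_, ?_, ?_, ?_⟩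
  · exact fun x => pushList_one L x
  · intro x
    by_cases hx : x ∈ mfdInterior n M
    · exact pushList_interior L hx 0
    · exact pushList_boundary L hx (hcov x hx)
  · exact fun tt => pushList_inj L tt
  · exact fun x hx tt => pushList_interior L hx tt
end
end
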